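/- arXiv:1907.06265 — 2 statements merged into one kernel-verified Lean document; each statement's English description precedes it below -/
import Mathlib

section
/- For every m ≥ 1, every word w' ∈ {0,1,2}^(m−1), and all distinct letters i, j ∈ {0,1,2}, the integers b(w,j) constructed by the paper's algorithms satisfy b(w'i, j) + b(w'j, i) = 0, where w'i and w'j denote the words of length m obtained by appending the letter i (respectively j) to w'. (This is condition (2.3) of Theorem 2.4.) -/
/-- `φ`: reread the binary expansion of `n` in base 3, so that
`φ(0) = 0`, `φ(2n) = 3 φ(n)`, `φ(2n+1) = 3 φ(n) + 1`. -/
def phi (n : ℕ) : ℕ := Nat.ofDigits 3 (Nat.digits 2 n)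

/-- `bₙ = 3 φ(n)`. -/
def bseq (n : ℕ) : ℕ := 3 * phi n

/-- The value of a word read as a binary numeral (big-endian). -/
def binVal (w : List (Fin 3)) : ℕ := w.foldl (fun acc d => 2 * acc + d.val) 0

/-- The values assigned in case (1) of the algorithm to the word `0 :: wt`,
all of whose letters lie in `{0, 1}`:  with `n = 2^(m-1) - N(w)`, we set
`b(w,0) = bₙ`, `b(w,1) = -b_{n-1}`, `b(w,2) = 3 - bₙ + b_{n-1}`. -/
def caseOneVal (wt : List (Fin 3)) (j : Fin 3) : ℤ :=
  let n := 2 ^ wt.length - binVal wt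
  if j = 0 then (bseq n : ℤ)
  else if j = 1 then -(bseq (n - 1) : ℤ)
  else 3 - (bseq n : ℤ) + (bseq (n - 1) : ℤ)

/-- `bTail wt j = b(0 :: wt, j)`, the `b`-values on words beginning with the letter `0`,
defined by the recursion (1)–(3) of the paper's algorithms. -/
def bTail : List (Fin 3) → Fin 3 → ℤ
  | [], j => caseOneVal [] j
  | x :: w', j =>
    if ∀ d ∈ x :: w', d = 0 ∨ d = 1 then
      -- case (1), letters in {0,1}
      caseOneVal (x :: w') j
    else if ∀ d ∈ x :: w', d = 0 ∨ d = 2 then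
      -- case (1), letters in {0,2} (with some letter equal to 2): by the 1 ↔ 2 symmetry
      caseOneVal ((x :: w').map (Equiv.swap 1 2)) (Equiv.swap 1 2 j)
    else
      -- cases (2) and (3): drop the second letter of the word
      bTail w' j

/-- `b(w, j)` for an arbitrary word `w`, via the alphabet-symmetric extension
`b(σ ∘ w, σ j) = b(w, j)`. -/
def bVal : List (Fin 3) → Fin 3 → ℤ
  | [], _ => 0
  | i :: wt, j =>
    if i = 0 then bTail wt j
    else if i = 1 then bTail (wt.map (Equiv.swap 0 1)) (Equiv.swap 0 1 j)
    else bTail (wt.map (Equiv.swap 0 2)) (Equiv.swap 0 2 j)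

/-!
The recursion makes `b(0w, ·)` depend only on the longest suffix of `w` avoiding one of the
letters `1`, `2`, and it commutes with the swap `1 ↔ 2` (for words of zeros this is the
identity `b_{2^s} = 2 b_{2^s - 1} + 3`). So it suffices to treat `w'` over `{0, 1}`, where
case (1) applies with `n = 2^(m-1) - N(w')`: appending `0` or `1` gives the indices `2n` and
`2n - 1`, and `b_k = b_{k-1} + 3` for odd `k`. Appending `2` instead leaves only the word
`0^t 2`, with `0^t` the trailing zeros of `w'`; `2^t` is the `2`-part of `n`, and
`b_{2^s m} - b_{2^s m - 1}` depends only on `s` when `m` is odd.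
-/

lemma Fin.three_forall_ne_of_symm {P : Fin 3 → Fin 3 → Prop} (symm : ∀ i j, P i j → P j i)
    (h01 : P 0 1) (h02 : P 0 2) (h12 : P 1 2) {i j : Fin 3} (hij : i ≠ j) : P i j := by
  fin_cases i <;> fin_cases j <;> first | exact absurd rfl hij | assumption | exact symm _ _ ‹_›

lemma phi_two_mul (n : ℕ) : phi (2 * n) = 3 * phi n := by
  rcases n.eq_zero_or_pos with rfl | hn
  · rfl
  · have h := Nat.digits_add 2 one_lt_two 0 n two_pos (Or.inr hn.ne')
    rw [zero_add] at h
    rw [phi, h, Nat.ofDigits_cons, zero_add, phi]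

lemma phi_two_mul_add_one (n : ℕ) : phi (2 * n + 1) = 3 * phi n + 1 := by
  have h := Nat.digits_add 2 one_lt_two 1 n one_lt_two (Or.inl one_ne_zero)
  rw [add_comm] at h
  rw [phi, h, Nat.ofDigits_cons, add_comm, phi]

lemma bseq_two_mul (n : ℕ) : bseq (2 * n) = 3 * bseq n := by
  simp only [bseq, phi_two_mul]

lemma bseq_two_mul_add_one (n : ℕ) : bseq (2 * n + 1) = 3 * bseq n + 3 := by
  simp only [bseq, phi_two_mul_add_one]; ring

lemma bseq_eq_bseq_pred_add_three {n : ℕ} (hn : Odd n) : (bseq n : ℤ) = bseq (n - 1) + 3 := by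
  obtain ⟨q, rfl⟩ := hn
  simp only [add_tsub_cancel_right, bseq_two_mul_add_one, bseq_two_mul]
  push_cast; ring

lemma bseq_two_mul_sub_pred {x : ℕ} (hx : 1 ≤ x) :
    (bseq (2 * x) : ℤ) - bseq (2 * x - 1) = 3 * (bseq x - bseq (x - 1)) - 3 := by
  obtain ⟨y, rfl⟩ := Nat.exists_eq_add_of_le' hx
  rw [show 2 * (y + 1) - 1 = 2 * y + 1 by omega, bseq_two_mul, bseq_two_mul_add_one,
    add_tsub_cancel_right]
  push_cast; ring

lemma bseq_two_pow_mul_sub_pred (s : ℕ) {m : ℕ} (hm : Odd m) :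
    (bseq (2 ^ s * m) : ℤ) - bseq (2 ^ s * m - 1) = bseq (2 ^ s) - bseq (2 ^ s - 1) := by
  induction s with
  | zero =>
    rw [pow_zero, one_mul, bseq_eq_bseq_pred_add_three hm, bseq_eq_bseq_pred_add_three odd_one]
    ring
  | succ s ih =>
    have hm0 : 1 ≤ m := hm.pos
    rw [pow_succ', mul_assoc, bseq_two_mul_sub_pred (Nat.one_le_iff_ne_zero.2 (by positivity)),
      bseq_two_mul_sub_pred Nat.one_le_two_pow, ih]

lemma bseq_two_pow_sub_two_mul_pred (s : ℕ) :
    (bseq (2 ^ s) : ℤ) - 2 * bseq (2 ^ s - 1) = 3 := by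
  induction s with
  | zero => rfl
  | succ s ih =>
    have hs : 2 * 2 ^ s - 1 = 2 * (2 ^ s - 1) + 1 := by
      have := Nat.one_le_two_pow (n := s)
      omega
    rw [pow_succ', hs, bseq_two_mul, bseq_two_mul_add_one]
    push_cast; linarith

lemma binVal_append_singleton (w : List (Fin 3)) (d : Fin 3) :
    binVal (w ++ [d]) = 2 * binVal w + d.val := by
  simp [binVal]

lemma binVal_lt_two_pow {w : List (Fin 3)} (h : 2 ∉ w) : binVal w < 2 ^ w.length := by
  induction w using List.reverseRecOn with
  | nil => simp [binVal]
  | append_singleton w d ih =>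
    have hd : d.val ≤ 1 := by
      have : d ≠ 2 := fun hd => h (by simp [hd])
      omega
    rw [binVal_append_singleton, List.length_append, List.length_singleton, pow_succ]
    have := ih (fun h2 => h (List.mem_append_left _ h2))
    omega

/-- The index `n = 2^(m-1) - N(w)` of case (1), for the word `0 :: w` of length `m`. -/
def binIndex (w : List (Fin 3)) : ℕ := 2 ^ w.length - binVal w

lemma binIndex_append_zero (w : List (Fin 3)) : binIndex (w ++ [0]) = 2 * binIndex w := by
  simp only [binIndex, binVal_append_singleton, List.length_append, List.length_singleton,
    pow_succ, Fin.val_zero]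
  omega

lemma binIndex_append_one (w : List (Fin 3)) : binIndex (w ++ [1]) = 2 * binIndex w - 1 := by
  simp only [binIndex, binVal_append_singleton, List.length_append, List.length_singleton,
    pow_succ, Fin.val_one]
  omega

lemma binIndex_append_replicate_zero (w : List (Fin 3)) (t : ℕ) :
    binIndex (w ++ List.replicate t 0) = 2 ^ t * binIndex w := by
  induction t with
  | zero => simp
  | succ t ih =>
    rw [List.replicate_succ', ← List.append_assoc, binIndex_append_zero, ih, pow_succ']
    ring

lemma binIndex_replicate_zero (t : ℕ) : binIndex (List.replicate t 0) = 2 ^ t := by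
  simpa [binIndex, binVal] using binIndex_append_replicate_zero [] t

lemma binIndex_pos {w : List (Fin 3)} (h : 2 ∉ w) : 0 < binIndex w :=
  Nat.sub_pos_of_lt (binVal_lt_two_pow h)

lemma odd_binIndex_append_one {w : List (Fin 3)} (h : 2 ∉ w) : Odd (binIndex (w ++ [1])) := by
  rw [binIndex_append_one]
  have := binIndex_pos h
  exact ⟨binIndex w - 1, by omega⟩

lemma caseOneVal_zero (w : List (Fin 3)) : caseOneVal w 0 = bseq (binIndex w) := rfl

lemma caseOneVal_one (w : List (Fin 3)) : caseOneVal w 1 = -bseq (binIndex w - 1) := rfl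

lemma caseOneVal_two (w : List (Fin 3)) :
    caseOneVal w 2 = 3 - bseq (binIndex w) + bseq (binIndex w - 1) := rfl

lemma caseOneVal_two_of_odd {w : List (Fin 3)} (h : Odd (binIndex w)) : caseOneVal w 2 = 0 := by
  rw [caseOneVal_two, bseq_eq_bseq_pred_add_three h]; ring

lemma caseOneVal_swap_of_binIndex_eq_two_pow {w : List (Fin 3)} {s : ℕ}
    (h : binIndex w = 2 ^ s) (j : Fin 3) :
    caseOneVal w (Equiv.swap 1 2 j) = caseOneVal w j := by
  have h12 : caseOneVal w 1 = caseOneVal w 2 := by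
    rw [caseOneVal_one, caseOneVal_two, h]
    linarith [bseq_two_pow_sub_two_mul_pred s]
  fin_cases j
  · rfl
  · exact h12.symm
  · exact h12

lemma caseOneVal_two_add_bseq {w : List (Fin 3)} {t m : ℕ} (hm : Odd m)
    (h : binIndex w = 2 ^ (t + 1) * m) : caseOneVal w 2 + bseq (2 ^ (t + 1) - 1) = 0 := by
  rw [caseOneVal_two, h]
  linarith [bseq_two_pow_mul_sub_pred (t + 1) hm, bseq_two_pow_sub_two_mul_pred (t + 1)]

lemma one_mem_map_swap_iff {w : List (Fin 3)} : 1 ∈ w.map (Equiv.swap 1 2) ↔ 2 ∈ w := by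
  simp only [List.mem_map, Equiv.swap_apply_eq_iff, Equiv.swap_apply_left, exists_eq_right]

lemma two_mem_map_swap_iff {w : List (Fin 3)} : 2 ∈ w.map (Equiv.swap 1 2) ↔ 1 ∈ w := by
  simp only [List.mem_map, Equiv.swap_apply_eq_iff, Equiv.swap_apply_right, exists_eq_right]

lemma bTail_of_two_not_mem {w : List (Fin 3)} (h : 2 ∉ w) (j : Fin 3) :
    bTail w j = caseOneVal w j := by
  cases w with
  | nil => rfl
  | cons x w =>
    rw [bTail, if_pos]
    intro d hd
    have : d ≠ 2 := fun e => h (e ▸ hd)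
    omega

lemma bTail_of_one_not_mem {w : List (Fin 3)} (h1 : 1 ∉ w) (h2 : 2 ∈ w) (j : Fin 3) :
    bTail w j = caseOneVal (w.map (Equiv.swap 1 2)) (Equiv.swap 1 2 j) := by
  cases w with
  | nil => simp at h2
  | cons x w =>
    rw [bTail, if_neg, if_pos]
    · intro d hd
      have : d ≠ 1 := fun e => h1 (e ▸ hd)
      omega
    · intro h
      rcases h 2 h2 with h | h <;> exact absurd h (by decide)

lemma bTail_cons_of_mem {x : Fin 3} {w : List (Fin 3)} (h1 : 1 ∈ x :: w) (h2 : 2 ∈ x :: w)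
    (j : Fin 3) : bTail (x :: w) j = bTail w j := by
  rw [bTail, if_neg, if_neg]
  · intro h; rcases h 1 h1 with h | h <;> exact absurd h (by decide)
  · intro h; rcases h 2 h2 with h | h <;> exact absurd h (by decide)

lemma bTail_append_one_cons (u : List (Fin 3)) {v : List (Fin 3)} (h : 2 ∈ v) (j : Fin 3) :
    bTail (u ++ 1 :: v) j = bTail v j := by
  induction u with
  | nil => exact bTail_cons_of_mem (by simp) (by simp [h]) j
  | cons x u ih => rw [List.cons_append, bTail_cons_of_mem (by simp) (by simp [h]), ih]

lemma bTail_map_swap (w : List (Fin 3)) (j : Fin 3) :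
    bTail (w.map (Equiv.swap 1 2)) (Equiv.swap 1 2 j) = bTail w j := by
  induction w with
  | nil =>
    exact caseOneVal_swap_of_binIndex_eq_two_pow (s := 0) rfl j
  | cons x w ih =>
    by_cases h2 : 2 ∈ x :: w
    · by_cases h1 : 1 ∈ x :: w
      · calc bTail ((x :: w).map (Equiv.swap 1 2)) (Equiv.swap 1 2 j)
            = bTail (w.map (Equiv.swap 1 2)) (Equiv.swap 1 2 j) :=
              bTail_cons_of_mem (one_mem_map_swap_iff.2 h2) (two_mem_map_swap_iff.2 h1) _
          _ = bTail (x :: w) j := by rw [ih, bTail_cons_of_mem h1 h2]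
      · rw [bTail_of_two_not_mem (mt two_mem_map_swap_iff.1 h1), bTail_of_one_not_mem h1 h2]
    · by_cases h1 : 1 ∈ x :: w
      · rw [bTail_of_one_not_mem (mt one_mem_map_swap_iff.1 h2) (two_mem_map_swap_iff.2 h1),
          bTail_of_two_not_mem h2]
        simp [List.map_map, Function.comp_def]
      · obtain ⟨n, hn⟩ : ∃ n, x :: w = List.replicate n 0 :=
          ⟨_, List.eq_replicate_iff.2 ⟨rfl, fun d hd => by
            have : d ≠ 1 := fun e => h1 (e ▸ hd)
            have : d ≠ 2 := fun e => h2 (e ▸ hd)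
            omega⟩⟩
        rw [hn, List.map_replicate, Equiv.swap_apply_of_ne_of_ne (by decide) (by decide),
          bTail_of_two_not_mem (by simp), bTail_of_two_not_mem (by simp),
          caseOneVal_swap_of_binIndex_eq_two_pow (binIndex_replicate_zero n)]

lemma bTail_append_one_two (w : List (Fin 3)) : bTail (w ++ [1]) 2 = 0 := by
  induction w with
  | nil => exact caseOneVal_two_of_odd (odd_binIndex_append_one (w := []) (by simp))
  | cons x w ih =>
    by_cases h2 : 2 ∈ x :: w
    · rw [List.cons_append, bTail_cons_of_mem (by simp) (by simpa using h2), ih]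
    · rw [bTail_of_two_not_mem (by simpa using h2)]
      exact caseOneVal_two_of_odd (odd_binIndex_append_one h2)

lemma bTail_append_two_one (w : List (Fin 3)) : bTail (w ++ [2]) 1 = 0 := by
  rw [← bTail_map_swap, List.map_append, List.map_singleton, Equiv.swap_apply_left,
    Equiv.swap_apply_right, bTail_append_one_two]

lemma bTail_replicate_zero_append_two (t : ℕ) :
    bTail (List.replicate t 0 ++ [2]) 0 = bseq (2 ^ (t + 1) - 1) := by
  have h10 : Equiv.swap (1 : Fin 3) 2 0 = 0 := by decide
  rw [← bTail_map_swap, List.map_append, List.map_singleton, List.map_replicate, h10,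
    Equiv.swap_apply_right, bTail_of_two_not_mem (by simp), caseOneVal_zero,
    binIndex_append_one, binIndex_replicate_zero, pow_succ']

/-- `t` is the number of trailing zeros of `w ++ 0^s`: `b(0 w 0^s 2, 0)` only sees them, and
they make up the `2`-adic valuation of the index. -/
lemma exists_binIndex_eq_and_bTail_append_two {w : List (Fin 3)} (h : 2 ∉ w) (s : ℕ) :
    ∃ t m, Odd m ∧ binIndex (w ++ List.replicate s 0) = 2 ^ t * m ∧
      bTail (w ++ List.replicate s 0 ++ [2]) 0 = bseq (2 ^ (t + 1) - 1) := by
  induction w using List.reverseRecOn generalizing s with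
  | nil =>
    exact ⟨s, 1, odd_one, by simp [binIndex_replicate_zero],
      by simp [bTail_replicate_zero_append_two]⟩
  | append_singleton w d ih =>
    have hw : 2 ∉ w := fun hw => h (List.mem_append_left _ hw)
    have hd : d = 0 ∨ d = 1 := by
      have : d ≠ 2 := fun e => h (by simp [e])
      omega
    rcases hd with rfl | rfl
    · simpa [List.replicate_succ] using ih hw (s + 1)
    · refine ⟨s, binIndex (w ++ [1]), odd_binIndex_append_one hw,
        binIndex_append_replicate_zero _ _, ?_⟩
      rw [List.append_assoc, List.append_assoc, List.singleton_append,
        bTail_append_one_cons _ (by simp), bTail_replicate_zero_append_two]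

lemma bTail_append_zero_one_add_of_two_not_mem {w : List (Fin 3)} (h : 2 ∉ w) :
    bTail (w ++ [0]) 1 + bTail (w ++ [1]) 0 = 0 := by
  rw [bTail_of_two_not_mem (by simpa using h), bTail_of_two_not_mem (by simpa using h),
    caseOneVal_one, caseOneVal_zero, binIndex_append_zero, binIndex_append_one]
  ring

lemma bTail_append_zero_two_add_of_two_not_mem {w : List (Fin 3)} (h : 2 ∉ w) :
    bTail (w ++ [0]) 2 + bTail (w ++ [2]) 0 = 0 := by
  obtain ⟨t, m, hm, hidx, hval⟩ := exists_binIndex_eq_and_bTail_append_two h 0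
  simp only [List.replicate_zero, List.append_nil] at hidx hval
  rw [bTail_of_two_not_mem (by simpa using h), hval]
  exact caseOneVal_two_add_bseq hm (by rw [binIndex_append_zero, hidx, pow_succ']; ring)

lemma bTail_append_add_of_two_not_mem {w : List (Fin 3)} (h : 2 ∉ w) {i j : Fin 3}
    (hij : i ≠ j) :
    bTail (w ++ [i]) j + bTail (w ++ [j]) i = 0 :=
  Fin.three_forall_ne_of_symm (P := fun i j => bTail (w ++ [i]) j + bTail (w ++ [j]) i = 0)
    (fun _ _ e => by rwa [add_comm])
    (bTail_append_zero_one_add_of_two_not_mem h) (bTail_append_zero_two_add_of_two_not_mem h)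
    (by rw [bTail_append_one_two, bTail_append_two_one, add_zero]) hij

lemma bTail_append_add (w : List (Fin 3)) {i j : Fin 3} (hij : i ≠ j) :
    bTail (w ++ [i]) j + bTail (w ++ [j]) i = 0 := by
  induction w with
  | nil => exact bTail_append_add_of_two_not_mem (by simp) hij
  | cons x w ih =>
    by_cases h2 : 2 ∈ x :: w
    · by_cases h1 : 1 ∈ x :: w
      · have drop (c k : Fin 3) : bTail (x :: (w ++ [c])) k = bTail (w ++ [c]) k :=
          bTail_cons_of_mem (List.mem_append_left _ h1) (List.mem_append_left _ h2) k
        rw [List.cons_append, List.cons_append, drop, drop, ih]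
      · rw [← bTail_map_swap (_ ++ [i]), ← bTail_map_swap (_ ++ [j])]
        simp only [List.map_append, List.map_singleton]
        exact bTail_append_add_of_two_not_mem (mt two_mem_map_swap_iff.1 h1)
          ((Equiv.injective _).ne hij)
    · exact bTail_append_add_of_two_not_mem h2 hij

lemma bVal_cons (x : Fin 3) (w : List (Fin 3)) (j : Fin 3) :
    bVal (x :: w) j = bTail (w.map (Equiv.swap 0 x)) (Equiv.swap 0 x j) := by
  fin_cases x <;> simp [bVal]

lemma bTail_nil_of_ne_zero {j : Fin 3} (hj : j ≠ 0) : bTail [] j = 0 := by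
  fin_cases j
  · exact absurd rfl hj
  · rfl
  · rfl

theorem bVal_append_add_eq_zero_general (w' : List (Fin 3)) (i j : Fin 3) (hij : i ≠ j) :
    bVal (w' ++ [i]) j + bVal (w' ++ [j]) i = 0 := by
  cases w' with
  | nil =>
    simp only [List.nil_append, bVal_cons, List.map_nil]
    rw [bTail_nil_of_ne_zero, bTail_nil_of_ne_zero, add_zero] <;>
      rw [Ne, Equiv.swap_apply_eq_iff, Equiv.swap_apply_left]
    exacts [hij, hij.symm]
  | cons x w =>
    simp only [List.cons_append, bVal_cons, List.map_append, List.map_singleton]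
    exact bTail_append_add _ ((Equiv.injective _).ne hij)

/-- Condition (2.3) of Theorem 2.4: for every `m ≥ 1`, every word
`w' ∈ {0,1,2}^(m-1)`, and all distinct letters `i ≠ j`, we have
`b(w'i, j) + b(w'j, i) = 0`. -/
theorem bVal_append_add_eq_zero (m : ℕ) (hm : 1 ≤ m) (w' : List (Fin 3))
    (hw : w'.length = m - 1) (i j : Fin 3) (hij : i ≠ j) :
    bVal (w' ++ [i]) j + bVal (w' ++ [j]) i = 0 :=
  bVal_append_add_eq_zero_general w' i j hij
end

section
/- For every m ≥ 2, the integers b(w,j) constructed by the paper's algorithms satisfy b(0·1·2^(m−2), 2) = 0 and b(0·2·1^(m−2), 1) = 0, where 0·1·2^(m−2) denotes the word of length m consisting of a 0, then a 1, then m−2 copies of 2 (and symmetrically for the other word). (This is the vanishing claim at the vertex where the two lower thirds of a face intersect, established by induction in the proof of Theorem 2.4.) -/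
lemma binVal_replicate_one (k : ℕ) : binVal (List.replicate k 1) = 2 ^ k - 1 := by
  induction k with
  | zero => rfl
  | succ k ih =>
    rw [List.replicate_succ', binVal_append_singleton, ih, pow_succ]
    have : 1 ≤ 2 ^ k := Nat.one_le_two_pow
    simp only [Fin.val_one]
    omega

lemma caseOneVal_replicate_one {j : Fin 3} (hj : j ≠ 0) (k : ℕ) :
    caseOneVal (List.replicate k 1) j = 0 := by
  have hn : 2 ^ k - binVal (List.replicate k 1) = 1 := by
    have : 1 ≤ 2 ^ k := Nat.one_le_two_pow
    rw [binVal_replicate_one]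
    omega
  fin_cases j
  · exact absurd rfl hj
  all_goals simp [caseOneVal, hn, bseq, phi]

lemma bTail_replicate_one {j : Fin 3} (hj : j ≠ 0) (k : ℕ) :
    bTail (List.replicate k 1) j = 0 := by
  cases k with
  | zero => exact caseOneVal_replicate_one hj 0
  | succ k =>
    rw [List.replicate_succ, bTail, if_pos, ← List.replicate_succ, caseOneVal_replicate_one hj]
    intro d hd
    rw [← List.replicate_succ] at hd
    exact Or.inr (List.eq_of_mem_replicate hd)

lemma bTail_replicate_two {j : Fin 3} (hj : j ≠ 0) (k : ℕ) :
    bTail (List.replicate k 2) j = 0 := by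
  cases k with
  | zero => exact caseOneVal_replicate_one hj 0
  | succ k =>
    have hswap : Equiv.swap (1 : Fin 3) 2 j ≠ 0 := by
      rwa [Ne, Equiv.swap_apply_eq_iff, Equiv.swap_apply_of_ne_of_ne] <;> decide
    rw [List.replicate_succ, bTail, if_neg, if_pos, ← List.replicate_succ, List.map_replicate]
    · exact caseOneVal_replicate_one hswap _
    · intro d hd
      rw [← List.replicate_succ] at hd
      exact Or.inr (List.eq_of_mem_replicate hd)
    · intro h
      simpa using h 2 List.mem_cons_self

/-- Cases (2) and (3) of the algorithm. -/
lemma bTail_cons_of_one_mem_of_two_mem {x : Fin 3} {w : List (Fin 3)} (h₁ : 1 ∈ x :: w)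
    (h₂ : 2 ∈ x :: w) (j : Fin 3) : bTail (x :: w) j = bTail w j := by
  rw [bTail, if_neg, if_neg]
  · intro h
    simpa using h 1 h₁
  · intro h
    simpa using h 2 h₂

theorem bVal_lower_thirds_vertex_general (m : ℕ) :
    bVal (0 :: 1 :: List.replicate (m - 2) 2) 2 = 0 ∧
      bVal (0 :: 2 :: List.replicate (m - 2) 1) 1 = 0 := by
  refine ⟨?_, ?_⟩ <;> show bTail _ _ = 0
  · cases m - 2 with
    | zero => exact bTail_replicate_one (by decide) 1
    | succ k =>
      rw [bTail_cons_of_one_mem_of_two_mem (by simp) (by simp)]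
      exact bTail_replicate_two (by decide) _
  · cases m - 2 with
    | zero => exact bTail_replicate_two (by decide) 1
    | succ k =>
      rw [bTail_cons_of_one_mem_of_two_mem (by simp) (by simp)]
      exact bTail_replicate_one (by decide) _

/-- The vanishing claim at the vertex where the two lower thirds of a face meet
(proof of Theorem 2.4): for every `m ≥ 2`, `b(0·1·2^(m-2), 2) = 0` and
`b(0·2·1^(m-2), 1) = 0`. -/
theorem bVal_lower_thirds_vertex (m : ℕ) (hm : 2 ≤ m) :
    bVal (0 :: 1 :: List.replicate (m - 2) 2) 2 = 0 ∧
      bVal (0 :: 2 :: List.replicate (m - 2) 1) 1 = 0 :=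
  bVal_lower_thirds_vertex_general m
end
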